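/- arXiv:1703.04264 — 5 statements merged into one kernel-verified Lean document; each statement's English description precedes it below -/
import Mathlib

section
/- Likelihood decomposition (measurement-indexed form): for the standard point-target likelihood l(Z | X) = ∑_{Z^c ⊎ Z₁ ⊎...⊎ Zₙ = Z} [c]^{Z^c} ∏_{i=1}^n ĺ(Z_i | x_i) with X = {x₁,...,xₙ} (elements distinct), one has the equivalent representation l({z₁,...,z_m} | X) = ∑_{U ⊎ Y₁ ⊎...⊎ Y_m = X} [1-p_d]^U ∏_{i=1}^m l̃(z_i | Y_i), where ĺ({z}|x) = p_d(x) p(z|x), ĺ(∅|x) = 1-p_d(x), ĺ(Z|x) = 0 for |Z| > 1; and l̃(z|{y}) = p_d(y) p(z|y), l̃(z|∅) = c(z), l̃(z|Y) = 0 for |Y| > 1. (The clutter normalization constant e^{-λ_c} is common to both sides and omitted.) -/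
open Finset

/-- Single-target likelihood `ĺ(S | x)`: `1 - p_d(x)` for `S = ∅`,
`p_d(x) p(z|x)` for `S = {z}`, and `0` for `|S| > 1`. -/
noncomputable def lhat {α β : Type*} [DecidableEq β] (pd : α → ℝ)
    (pz : β → α → ℝ) (S : Finset β) (x : α) : ℝ :=
  if S = ∅ then 1 - pd x else if S.card = 1 then pd x * ∑ z ∈ S, pz z x else 0

/-- Measurement-origin likelihood `l̃(z | Y)`: `c(z)` for `Y = ∅`,
`p_d(y) p(z|y)` for `Y = {y}`, and `0` for `|Y| > 1`. -/
noncomputable def ltilde {α β : Type*} [DecidableEq α] (pd : α → ℝ)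
    (pz : β → α → ℝ) (c : β → ℝ) (z : β) (Y : Finset α) : ℝ :=
  if Y = ∅ then c z else if Y.card = 1 then ∑ y ∈ Y, pd y * pz z y else 0

/-- Target-indexed standard point-target likelihood (up to the common constant
`e^{-λ_c}`): the sum over ordered decompositions `Z = Z^c ⊎ (Z_x)_{x∈X}`
(encoded by `ψ : Z → Option X`) of `[c]^{Z^c} ∏_{x∈X} ĺ(Z_x | x)`. -/
noncomputable def stdLik {α β : Type*} [DecidableEq α] [DecidableEq β]
    (pd : α → ℝ) (pz : β → α → ℝ) (c : β → ℝ)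
    (Z : Finset β) (X : Finset α) : ℝ :=
  ∑ ψ : {z // z ∈ Z} → Option {x // x ∈ X},
    (∏ z ∈ (Finset.univ.filter (fun z => ψ z = none)).image Subtype.val, c z) *
      ∏ x : {x // x ∈ X},
        lhat pd pz ((Finset.univ.filter (fun z => ψ z = some x)).image Subtype.val) x.1

/-- Measurement-indexed likelihood representation (up to `e^{-λ_c}`): the sum
over ordered decompositions `X = U ⊎ (Y_z)_{z∈Z}` (encoded by
`φ : X → Option Z`) of `[1-p_d]^U ∏_{z∈Z} l̃(z | Y_z)`. -/
noncomputable def lsLik {α β : Type*} [DecidableEq α] [DecidableEq β]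
    (pd : α → ℝ) (pz : β → α → ℝ) (c : β → ℝ)
    (Z : Finset β) (X : Finset α) : ℝ :=
  ∑ φ : {x // x ∈ X} → Option {z // z ∈ Z},
    (∏ u ∈ (Finset.univ.filter (fun a => φ a = none)).image Subtype.val, (1 - pd u)) *
      ∏ z : {z // z ∈ Z},
        ltilde pd pz c z.1 ((Finset.univ.filter (fun a => φ a = some z)).image Subtype.val)

/-! Only the assignments `ψ : Z → Option X` that never send two measurements to the same target
contribute to `stdLik`, since `ĺ` vanishes on sets of two or more measurements; symmetrically for
`lsLik`. These assignments are exactly the partial bijections `Z ≃. X`, and the weight of a partial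
bijection is `[c]^{unmatched Z} [1 - p_d]^{unmatched X} ∏_{matched (z, x)} p_d(x) p(z|x)`, which is
invariant under passing to the inverse partial bijection `X ≃. Z`. -/

namespace StdLik

variable {R : Type*} [CommSemiring R]

noncomputable def cellWeight {ι : Type*} [DecidableEq ι] (b : R) (w : ι → R) (S : Finset ι) : R :=
  if S = ∅ then b else if S.card = 1 then ∑ i ∈ S, w i else 0

theorem cellWeight_eq_zero {ι : Type*} [DecidableEq ι] (b : R) (w : ι → R) {S : Finset ι}
    (hS : 1 < S.card) : cellWeight b w S = 0 := by
  have : S ≠ ∅ := by rintro rfl; simp at hS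
  simp [cellWeight, this, hS.ne']

theorem cellWeight_toFinset {ι : Type*} [DecidableEq ι] (b : R) (w : ι → R) (o : Option ι) :
    cellWeight b w o.toFinset = o.elim b w := by
  cases o <;> simp [cellWeight]

theorem cellWeight_image {ι κ : Type*} [DecidableEq ι] [DecidableEq κ] (b : R) (w : κ → R)
    {f : ι → κ} (hf : Function.Injective f) (S : Finset ι) :
    cellWeight b w (S.image f) = cellWeight b (w ∘ f) S := by
  simp [cellWeight, sum_image hf.injOn, card_image_of_injective _ hf]

theorem lhat_eq_cellWeight {α β : Type*} [DecidableEq β] (pd : α → ℝ) (pz : β → α → ℝ)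
    (S : Finset β) (x : α) :
    lhat pd pz S x = cellWeight (1 - pd x) (fun z => pd x * pz z x) S := by
  simp only [lhat, cellWeight, mul_sum]

theorem ltilde_eq_cellWeight {α β : Type*} [DecidableEq α] (pd : α → ℝ) (pz : β → α → ℝ)
    (c : β → ℝ) (z : β) (Y : Finset α) :
    ltilde pd pz c z Y = cellWeight (c z) (fun y => pd y * pz z y) Y := rfl

theorem elim_eq_ite_mul_prod {ι : Type*} (o : Option ι) (b : R) (w : ι → R) :
    o.elim b w = (if o = none then b else 1) * ∏ i ∈ o.toFinset, w i := by
  cases o <;> simp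

variable {γ δ : Type*}

theorem mem_range_pequiv_coe {ψ : γ → Option δ}
    (hψ : ∀ z z' y, ψ z = some y → ψ z' = some y → z = z') :
    ψ ∈ Set.range (DFunLike.coe : (γ ≃. δ) → γ → Option δ) := by
  classical
  refine ⟨⟨ψ, fun y => if h : ∃ z, ψ z = some y then some h.choose else none, ?_⟩, rfl⟩
  intro z y
  constructor
  · intro h
    split_ifs at h with hy
    cases h
    exact hy.choose_spec
  · intro h
    have hy : ∃ z, ψ z = some y := ⟨z, h⟩
    simp only [dif_pos hy, Option.some.injEq]
    exact hψ _ _ _ hy.choose_spec h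

variable [Fintype γ] [DecidableEq δ]

theorem filter_pequiv_eq_some (e : γ ≃. δ) (y : δ) :
    univ.filter (e · = some y) = (e.symm y).toFinset := by
  ext z
  simp [PEquiv.eq_some_iff]

variable [Fintype δ] [DecidableEq γ]

noncomputable def assignWeight (a : γ → R) (b : δ → R) (w : γ → δ → R) (ψ : γ → Option δ) : R :=
  (∏ z ∈ univ.filter (ψ · = none), a z) *
    ∏ y, cellWeight (b y) (w · y) (univ.filter (ψ · = some y))

theorem assignWeight_pequiv (a : γ → R) (b : δ → R) (w : γ → δ → R) (e : γ ≃. δ) :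
    assignWeight a b w e = (∏ z ∈ univ.filter (e · = none), a z) *
      (∏ y ∈ univ.filter (e.symm · = none), b y) * ∏ y, ∏ z ∈ (e.symm y).toFinset, w z y := by
  simp only [assignWeight, filter_pequiv_eq_some, cellWeight_toFinset, elim_eq_ite_mul_prod,
    prod_mul_distrib, ← prod_filter, mul_assoc]

theorem assignWeight_subtype {ι κ : Type*} [DecidableEq ι] [DecidableEq κ] (s : Finset ι)
    (t : Finset κ) (a : ι → R) (b : κ → R) (w : ι → κ → R) (ψ : s → Option t) :
    assignWeight (fun z : s => a z) (fun x : t => b x) (fun z x => w z x) ψ =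
      (∏ z ∈ (univ.filter (ψ · = none)).image Subtype.val, a z) *
        ∏ x : t, cellWeight (b x) (w · x) ((univ.filter (ψ · = some x)).image Subtype.val) := by
  simp only [assignWeight, prod_image Subtype.val_injective.injOn,
    cellWeight_image _ _ Subtype.val_injective]
  rfl

noncomputable instance : Fintype (γ ≃. δ) := Fintype.ofInjective _ DFunLike.coe_injective

theorem assignWeight_eq_zero (a : γ → R) (b : δ → R) (w : γ → δ → R) {ψ : γ → Option δ}
    {z z' : γ} {y : δ} (hz : ψ z = some y) (hz' : ψ z' = some y) (hne : z ≠ z') :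
    assignWeight a b w ψ = 0 := by
  refine mul_eq_zero_of_right _ (prod_eq_zero (mem_univ y) (cellWeight_eq_zero _ _ ?_))
  refine lt_of_lt_of_le ?_ (card_le_card (s := {z, z'}) ?_)
  · simp [card_pair hne]
  · simp [insert_subset_iff, hz, hz']

theorem sum_assignWeight_eq_sum_pequiv (a : γ → R) (b : δ → R) (w : γ → δ → R) :
    ∑ ψ, assignWeight a b w ψ = ∑ e : γ ≃. δ, assignWeight a b w e := by
  refine (Fintype.sum_of_injective _ DFunLike.coe_injective _ _ ?_ fun _ => rfl).symm
  intro ψ hψ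
  contrapose! hψ
  refine mem_range_pequiv_coe fun z z' y hz hz' => ?_
  by_contra hne
  exact hψ (assignWeight_eq_zero a b w hz hz' hne)

theorem sum_assignWeight_comm (a : γ → R) (b : δ → R) (w : γ → δ → R) :
    ∑ ψ, assignWeight a b w ψ = ∑ φ, assignWeight b a (flip w) φ := by
  rw [sum_assignWeight_eq_sum_pequiv, sum_assignWeight_eq_sum_pequiv]
  refine Fintype.sum_bijective _ PEquiv.symm_bijective _ _ fun e => ?_
  have hmatched : ∏ y, ∏ z ∈ (e.symm y).toFinset, w z y = ∏ z, ∏ y ∈ (e z).toFinset, w z y :=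
    prod_comm' fun y z => by simp [PEquiv.eq_some_iff]
  simp only [assignWeight_pequiv, PEquiv.symm_symm, flip, hmatched]
  ac_rfl

end StdLik

open StdLik in
/-- Likelihood decomposition: the target-indexed and the measurement-indexed
representations of the standard point-target likelihood agree. -/
theorem stdLik_eq_lsLik {α β : Type*} [DecidableEq α] [DecidableEq β]
    (pd : α → ℝ) (pz : β → α → ℝ) (c : β → ℝ)
    (Z : Finset β) (X : Finset α) :
    stdLik pd pz c Z X = lsLik pd pz c Z X := by
  calc stdLik pd pz c Z X
      = ∑ ψ, assignWeight (fun z : Z => c z) (fun x : X => 1 - pd x)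
          (fun z x => pd x * pz z x) ψ := by
        simp only [stdLik, lhat_eq_cellWeight,
          assignWeight_subtype Z X c (fun x => 1 - pd x) (fun z x => pd x * pz z x)]
    _ = ∑ φ, assignWeight (fun x : X => 1 - pd x) (fun z : Z => c z)
          (fun x z => pd x * pz z x) φ := sum_assignWeight_comm _ _ _
    _ = lsLik pd pz c Z X := by
        simp only [lsLik, ltilde_eq_cellWeight,
          assignWeight_subtype X Z (fun x => 1 - pd x) c (fun x z => pd x * pz z x)]
end

section
/- Base case and induction step for the likelihood equivalence: with l and l_s denoting respectively the target-indexed and measurement-indexed likelihood representations (as in the previous statement), one has l_s(Z ∪ {z_{m+1}} | X) = l̃(z_{m+1}|∅) · l_s(Z|X) + ∑_{j=1}^n l̃(z_{m+1} | {x_j}) · l_s(Z | X \ {x_j}) for z_{m+1} ∉ Z. -/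
open Finset

/-! Identify `Option (insert z' Z)` with `Option (Option Z)`, the new measurement `z'`
becoming `some none`. Grouping the assignments of `X` by the set `A ⊆ X` of targets sent to
`z'` splits off the factor `l̃(z' | A)`, and what remains is an assignment of `X \ A` to
`Option Z`; hence `l_s(Z ∪ {z'} | X) = ∑_{A ⊆ X} l̃(z' | A) l_s(Z | X \ A)`. Since
`l̃(z' | A) = 0` for `|A| > 1`, only `A = ∅` and the singletons survive. -/

section Fiber

variable {α : Type*} [DecidableEq α] {X : Finset α} {γ : Type*} [DecidableEq γ]

def fiber (φ : {x // x ∈ X} → γ) (o : γ) : Finset α :=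
  (univ.filter (fun a => φ a = o)).image Subtype.val

theorem mem_fiber {φ : {x // x ∈ X} → γ} {o : γ} {a : α} :
    a ∈ fiber φ o ↔ ∃ h : a ∈ X, φ ⟨a, h⟩ = o := by
  simp [fiber]

theorem fiber_subset (φ : {x // x ∈ X} → γ) (o : γ) : fiber φ o ⊆ X := fun _ ha =>
  (mem_fiber.1 ha).1

theorem fiber_comp_of_injective {δ : Type*} [DecidableEq δ]
    {g : γ → δ} (hg : g.Injective) (φ : {x // x ∈ X} → γ) (o : γ) :
    fiber (g ∘ φ) (g o) = fiber φ o := by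
  ext a
  simp only [mem_fiber, Function.comp_apply, hg.eq_iff]

end Fiber

section Extend

variable {α : Type*} [DecidableEq α] {X : Finset α} {γ : Type*} [DecidableEq γ]

def extendOnSdiff (A : Finset α) (g : {x // x ∈ X \ A} → Option γ) :
    {x // x ∈ X} → Option (Option γ) :=
  fun x => if h : x.1 ∈ A then some none else (g ⟨x, mem_sdiff.2 ⟨x.2, h⟩⟩).map some

theorem fiber_extendOnSdiff_some_none {A : Finset α} (hA : A ⊆ X)
    (g : {x // x ∈ X \ A} → Option γ) : fiber (extendOnSdiff A g) (some none) = A := by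
  ext a
  simp only [mem_fiber, extendOnSdiff]
  constructor
  · rintro ⟨_, h⟩
    by_contra ha
    simp [ha] at h
  · intro ha
    exact ⟨hA ha, by simp [ha]⟩

theorem fiber_extendOnSdiff_map_some (A : Finset α) (g : {x // x ∈ X \ A} → Option γ)
    (o : Option γ) : fiber (extendOnSdiff A g) (o.map some) = fiber g o := by
  ext a
  simp only [mem_fiber, extendOnSdiff, mem_sdiff]
  constructor
  · rintro ⟨hX, h⟩
    by_cases ha : a ∈ A
    · cases o <;> simp [ha] at h
    · simp only [dif_neg ha, (Option.map_injective (Option.some_injective γ)).eq_iff] at h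
      exact ⟨⟨hX, ha⟩, h⟩
  · rintro ⟨⟨hX, ha⟩, h⟩
    exact ⟨hX, by simp [ha, h]⟩

theorem extendOnSdiff_join {A : Finset α} (ψ : {x // x ∈ X} → Option (Option γ))
    (hψ : fiber ψ (some none) = A) :
    extendOnSdiff A (fun y => (ψ ⟨y, (mem_sdiff.1 y.2).1⟩).join) = ψ := by
  funext x
  simp only [extendOnSdiff, ← hψ, mem_fiber]
  by_cases hx : ∃ h, ψ ⟨x.1, h⟩ = some none
  · rw [dif_pos hx]
    exact hx.2.symm
  · rw [dif_neg hx]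
    rcases h : ψ x with _ | _ | t
    · rfl
    · exact absurd ⟨x.2, h⟩ hx
    · rfl

end Extend

theorem sum_powerset_eq_of_one_lt_card {α M : Type*} [DecidableEq α] [AddCommMonoid M]
    (X : Finset α) (f : Finset α → M) (hf : ∀ Y ⊆ X, 1 < Y.card → f Y = 0) :
    ∑ Y ∈ X.powerset, f Y = f ∅ + ∑ x ∈ X, f {x} := by
  have hsub : insert ∅ (X.map ⟨singleton, singleton_injective⟩) ⊆ X.powerset := by
    intro Y hY
    simp only [mem_insert, mem_map, Function.Embedding.coeFn_mk] at hY
    rcases hY with rfl | ⟨x, hx, rfl⟩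
    · exact empty_mem_powerset X
    · simpa using hx
  rw [← sum_subset hsub fun Y hY hYS => hf Y (mem_powerset.1 hY) ?_, sum_insert, sum_map]
  · rfl
  · simp
  · simp only [mem_insert, mem_map, Function.Embedding.coeFn_mk, not_or, not_exists, not_and]
      at hYS
    by_contra! hle
    interval_cases h : Y.card
    · exact hYS.1 (card_eq_zero.1 h)
    · obtain ⟨x, rfl⟩ := card_eq_one.1 h
      exact hYS.2 x (singleton_subset_iff.1 (mem_powerset.1 hY)) rfl

section Likelihood

variable {α β : Type*} [DecidableEq α]

theorem ltilde_eq_zero_of_one_lt_card (pd : α → ℝ) (pz : β → α → ℝ) (c : β → ℝ) (z : β)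
    {Y : Finset α} (hY : 1 < Y.card) : ltilde pd pz c z Y = 0 := by
  have hne : Y ≠ ∅ := by rintro rfl; simp at hY
  rw [ltilde, if_neg hne, if_neg hY.ne']

variable [DecidableEq β] (pd : α → ℝ) (pz : β → α → ℝ) (c : β → ℝ)

theorem lsLik_eq_sum_fiber (Z : Finset β) (X : Finset α) :
    lsLik pd pz c Z X = ∑ φ : {x // x ∈ X} → Option {z // z ∈ Z},
      (∏ u ∈ fiber φ none, (1 - pd u)) * ∏ z, ltilde pd pz c z.1 (fiber φ (some z)) :=
  rfl

theorem lsLik_insert_eq_sum_option {Z : Finset β} {z' : β} (hz : z' ∉ Z) (X : Finset α) :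
    lsLik pd pz c (insert z' Z) X = ∑ ψ : {x // x ∈ X} → Option (Option {z // z ∈ Z}),
      (∏ u ∈ fiber ψ none, (1 - pd u)) * (ltilde pd pz c z' (fiber ψ (some none)) *
        ∏ z, ltilde pd pz c z.1 (fiber ψ (some (some z)))) := by
  set e := (subtypeInsertEquivOption hz).symm
  have hfiber (ψ : {x // x ∈ X} → Option (Option {z // z ∈ Z})) (o : Option _) :
      fiber (Option.map e ∘ ψ) (o.map e) = fiber ψ o :=
    fiber_comp_of_injective (Option.map_injective e.injective) ψ o
  rw [lsLik_eq_sum_fiber]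
  refine (Fintype.sum_equiv (Equiv.piCongrRight fun _ => e.optionCongr) _ _ fun ψ => ?_).symm
  rw [← Fintype.prod_equiv e (fun o => ltilde pd pz c (e o).1 (fiber ψ (some o))) _
    fun o => congrArg _ (hfiber ψ (some o)).symm, Fintype.prod_option]
  exact congrArg (fun s => (∏ u ∈ s, (1 - pd u)) * _) (hfiber ψ none).symm

theorem sum_fiber_some_none_eq {Z : Finset β} {X A : Finset α} (hA : A ⊆ X) (z' : β) :
    ∑ ψ ∈ univ.filter
        (fun ψ : {x // x ∈ X} → Option (Option {z // z ∈ Z}) => fiber ψ (some none) = A),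
      (∏ u ∈ fiber ψ none, (1 - pd u)) * (ltilde pd pz c z' (fiber ψ (some none)) *
        ∏ z, ltilde pd pz c z.1 (fiber ψ (some (some z))))
      = ltilde pd pz c z' A * lsLik pd pz c Z (X \ A) := by
  rw [lsLik_eq_sum_fiber, mul_sum]
  symm
  refine sum_nbij' (extendOnSdiff A) (fun ψ y => (ψ ⟨y, (mem_sdiff.1 y.2).1⟩).join)
    (fun g _ => mem_filter.2 ⟨mem_univ _, fiber_extendOnSdiff_some_none hA g⟩)
    (fun _ _ => mem_univ _) (fun g _ => ?_)
    (fun ψ hψ => extendOnSdiff_join ψ (mem_filter.1 hψ).2) fun g _ => ?_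
  · funext y
    simp only [extendOnSdiff, dif_neg (mem_sdiff.1 y.2).2]
    cases g y <;> rfl
  · have hnone : fiber (extendOnSdiff A g) none = fiber g none :=
      fiber_extendOnSdiff_map_some A g none
    have hsome (z) : fiber (extendOnSdiff A g) (some (some z)) = fiber g (some z) :=
      fiber_extendOnSdiff_map_some A g (some z)
    simp only [fiber_extendOnSdiff_some_none hA, hnone, hsome]
    ring

theorem lsLik_insert_eq_sum_powerset {Z : Finset β} {z' : β} (hz : z' ∉ Z) (X : Finset α) :
    lsLik pd pz c (insert z' Z) X =
      ∑ A ∈ X.powerset, ltilde pd pz c z' A * lsLik pd pz c Z (X \ A) := by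
  rw [lsLik_insert_eq_sum_option pd pz c hz,
    ← sum_fiberwise_of_maps_to fun ψ _ => mem_powerset.2 (fiber_subset ψ (some none))]
  exact sum_congr rfl fun A hA => sum_fiber_some_none_eq pd pz c (mem_powerset.1 hA) z'

end Likelihood

/-- Recursion of the measurement-indexed likelihood in the measurement
argument: for `z' ∉ Z`,
`l_s(Z ∪ {z'} | X) = l̃(z'|∅) l_s(Z|X) + ∑_{x∈X} l̃(z'|{x}) l_s(Z|X\{x})`. -/
theorem lsLik_insert_measurement {α β : Type*} [DecidableEq α] [DecidableEq β]
    (pd : α → ℝ) (pz : β → α → ℝ) (c : β → ℝ)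
    (Z : Finset β) (X : Finset α) (z' : β) (hz : z' ∉ Z) :
    lsLik pd pz c (insert z' Z) X =
      ltilde pd pz c z' ∅ * lsLik pd pz c Z X +
        ∑ x ∈ X, ltilde pd pz c z' {x} * lsLik pd pz c Z (X.erase x) := by
  rw [lsLik_insert_eq_sum_powerset pd pz c hz, sum_powerset_eq_of_one_lt_card X _
    fun Y _ hY => by rw [ltilde_eq_zero_of_one_lt_card pd pz c z' hY, zero_mul], sdiff_empty]
  simp only [sdiff_singleton_eq_erase]
end

section
/- Bayesian update of a Bernoulli component with a missed detection: with f, t as above, q(X) = t(∅|X) f(X)/ρ₀ with ρ₀ = 1 - r + r ∑_x (1-p_d(x)) p(x) is a Bernoulli density with existence probability r·(∑_x (1-p_d(x)) p(x)) / ρ₀ and state density proportional to (1-p_d(x)) p(x), provided ρ₀ > 0 and ∑_x (1-p_d(x)) p(x) > 0. In particular ρ₀ > 0 whenever r < 1 or p_d < 1 somewhere on the support of p. -/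
open Finset

/-!
A missed detection multiplies a Bernoulli density by `t(∅|·)`, which is `1` on `∅`, `1 - p_d(x)`
on `{x}` and irrelevant on larger sets, where the density already vanishes. Dividing by
`ρ₀ = 1 - r + r Q` with `Q = ∑ₓ (1 - p_d(x)) p(x)` and writing `r (1 - p_d(x)) p(x)` as
`(r Q) · ((1 - p_d(x)) p(x) / Q)` exhibits the result as a Bernoulli density; its empty-set value
is `(1 - r) / ρ₀ = 1 - r Q / ρ₀`. The normalizer is a convex combination of `1` and `Q ≥ 0`, and
`Q > 0` as soon as one term of its series is.
-/

section Update

variable {α K : Type*} [Field K]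

def IsBernoulliDensity (g : Finset α → K) (r : K) (p : α → K) : Prop :=
  g ∅ = 1 - r ∧ (∀ x, g {x} = r * p x) ∧ ∀ X : Finset α, 2 ≤ X.card → g X = 0

/-- The likelihood `t(∅|X)` that no measurement is produced by the set of targets `X`. -/
def missedDetectionLikelihood [DecidableEq α] (pd : α → K) (X : Finset α) : K :=
  if X = ∅ then 1 else if X.card = 1 then ∑ x ∈ X, (1 - pd x) else 0

theorem IsBernoulliDensity.missedDetection_update [DecidableEq α] {f q : Finset α → K}
    {r Q ρ₀ : K} {p pd : α → K} (hf : IsBernoulliDensity f r p) (hρ₀ : ρ₀ = 1 - r + r * Q)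
    (hρ₀ne : ρ₀ ≠ 0) (hQ : Q ≠ 0)
    (hq : ∀ X, q X = missedDetectionLikelihood pd X * f X / ρ₀) :
    IsBernoulliDensity q (r * Q / ρ₀) (fun x => (1 - pd x) * p x / Q) := by
  obtain ⟨hemp, hsing, hbig⟩ := hf
  refine ⟨?_, fun x => ?_, fun X hX => ?_⟩
  · rw [hq, hemp, missedDetectionLikelihood, if_pos rfl]
    field_simp
    rw [hρ₀]
    ring
  · rw [hq, hsing, missedDetectionLikelihood, if_neg (singleton_ne_empty x),
      if_pos (card_singleton x), sum_singleton]
    field_simp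
  · rw [hq, hbig X hX, mul_zero, zero_div]

end Update

theorem one_sub_add_mul_pos {K : Type*} [Field K] [LinearOrder K] [IsStrictOrderedRing K]
    {r Q : K} (hr0 : 0 ≤ r) (hr1 : r ≤ 1) (hQ : 0 ≤ Q) (h : r < 1 ∨ 0 < Q) :
    0 < 1 - r + r * Q := by
  rcases h with hr | hQpos
  · nlinarith [mul_nonneg hr0 hQ]
  · rcases hr0.eq_or_lt with rfl | hrpos
    · simp
    · nlinarith [mul_pos hrpos hQpos]

theorem missedDetection_normalizer_pos {α : Type*} {r : ℝ} {p pd : α → ℝ}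
    (hr0 : 0 ≤ r) (hr1 : r ≤ 1) (hp : ∀ x, 0 ≤ p x) (hpd : ∀ x, 0 ≤ pd x ∧ pd x ≤ 1)
    (hsum : Summable fun x => (1 - pd x) * p x) (h : r < 1 ∨ ∃ x, 0 < p x ∧ pd x < 1) :
    0 < 1 - r + r * ∑' x, (1 - pd x) * p x := by
  have hterm_nonneg : ∀ x, 0 ≤ (1 - pd x) * p x :=
    fun x => mul_nonneg (sub_nonneg.2 (hpd x).2) (hp x)
  refine one_sub_add_mul_pos hr0 hr1 (tsum_nonneg hterm_nonneg) (h.imp_right ?_)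
  rintro ⟨x, hpx, hpdx⟩
  exact hsum.tsum_pos hterm_nonneg x (mul_pos (sub_pos.2 hpdx) hpx)

theorem bernoulli_update_misdetection_general {α : Type*} [DecidableEq α]
    (r : ℝ) (hr0 : 0 ≤ r) (hr1 : r ≤ 1)
    (p : α → ℝ) (hp : ∀ x, 0 ≤ p x)
    (pd : α → ℝ) (hpd : ∀ x, 0 ≤ pd x ∧ pd x ≤ 1)
    (hsum : Summable (fun x => (1 - pd x) * p x))
    (f : Finset α → ℝ)
    (hemp : f ∅ = 1 - r) (hsing : ∀ x, f {x} = r * p x)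
    (hbig : ∀ X : Finset α, 2 ≤ X.card → f X = 0)
    (Q : ℝ) (hQ : Q = ∑' x, (1 - pd x) * p x)
    (ρ₀ : ℝ) (hρ₀ : ρ₀ = 1 - r + r * Q)
    (hρ₀pos : 0 < ρ₀) (hQpos : 0 < Q)
    (q : Finset α → ℝ)
    (hq : ∀ X : Finset α,
      q X = (if X = ∅ then 1 else if X.card = 1 then ∑ x ∈ X, (1 - pd x) else 0)
          * f X / ρ₀) :
    q ∅ = 1 - r * Q / ρ₀ ∧
    (∀ x : α, q {x} = (r * Q / ρ₀) * ((1 - pd x) * p x / Q)) ∧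
    (∀ X : Finset α, 2 ≤ X.card → q X = 0) ∧
    ((r < 1 ∨ ∃ x, 0 < p x ∧ pd x < 1) → 0 < 1 - r + r * Q) := by
  have hupdate : IsBernoulliDensity q (r * Q / ρ₀) (fun x => (1 - pd x) * p x / Q) :=
    IsBernoulliDensity.missedDetection_update ⟨hemp, hsing, hbig⟩ hρ₀ hρ₀pos.ne' hQpos.ne' hq
  refine ⟨hupdate.1, hupdate.2.1, hupdate.2.2, fun h => ?_⟩
  rw [hQ]
  exact missedDetection_normalizer_pos hr0 hr1 hp hpd hsum h

/-- Bayesian update of a Bernoulli component with a missed detection: if `f`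
is Bernoulli with existence `r` and pmf `p`, the updated density
`q(X) = t(∅|X) f(X)/ρ₀` with `ρ₀ = 1 - r + r Q`, `Q = ∑_x (1-p_d(x)) p(x)`, is
Bernoulli with existence probability `r Q / ρ₀` and state density
`(1-p_d(x)) p(x) / Q`, provided `ρ₀ > 0` and `Q > 0`.  In particular `ρ₀ > 0`
whenever `r < 1` or `p_d < 1` somewhere on the support of `p`. -/
theorem bernoulli_update_misdetection {α : Type*} [DecidableEq α] [Countable α]
    (r : ℝ) (hr0 : 0 ≤ r) (hr1 : r ≤ 1)
    (p : α → ℝ) (hp : ∀ x, 0 ≤ p x) (hpsum : Summable p) (hp1 : ∑' x, p x = 1)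
    (pd : α → ℝ) (hpd : ∀ x, 0 ≤ pd x ∧ pd x ≤ 1)
    (hsum : Summable (fun x => (1 - pd x) * p x))
    (f : Finset α → ℝ)
    (hemp : f ∅ = 1 - r) (hsing : ∀ x, f {x} = r * p x)
    (hbig : ∀ X : Finset α, 2 ≤ X.card → f X = 0)
    (Q : ℝ) (hQ : Q = ∑' x, (1 - pd x) * p x)
    (ρ₀ : ℝ) (hρ₀ : ρ₀ = 1 - r + r * Q)
    (hρ₀pos : 0 < ρ₀) (hQpos : 0 < Q)
    (q : Finset α → ℝ)
    (hq : ∀ X : Finset α,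
      q X = (if X = ∅ then 1 else if X.card = 1 then ∑ x ∈ X, (1 - pd x) else 0)
          * f X / ρ₀) :
    q ∅ = 1 - r * Q / ρ₀ ∧
    (∀ x : α, q {x} = (r * Q / ρ₀) * ((1 - pd x) * p x / Q)) ∧
    (∀ X : Finset α, 2 ≤ X.card → q X = 0) ∧
    ((r < 1 ∨ ∃ x, 0 < p x ∧ pd x < 1) → 0 < 1 - r + r * Q) :=
  bernoulli_update_misdetection_general r hr0 hr1 p hp pd hpd hsum f hemp hsing hbig Q hQ ρ₀ hρ₀
    hρ₀pos hQpos q hq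
end

section
/- Convolution of two multi-Bernoulli mixtures is a multi-Bernoulli mixture: if f(X) = ∑_j w_j ∑_{X₁⊎...⊎Xₙ=X} ∏ᵢ f_{j,i}(Xᵢ) and g(Y) = ∑_k v_k ∑_{Y₁⊎...⊎Y_{n_b}=Y} ∏ᵢ g_{k,i}(Yᵢ) are MBMs (each f_{j,i}, g_{k,i} Bernoulli), then their convolution h(W) = ∑_{X⊎Y=W} f(X) g(Y) equals ∑_{j,k} w_j v_k ∑_{X₁⊎...⊎Xₙ⊎Y₁⊎...⊎Y_{n_b}=W} ∏ᵢ f_{j,i}(Xᵢ) ∏ᵢ g_{k,i}(Yᵢ), i.e. an MBM whose components index over pairs (j,k) and concatenate the Bernoulli lists. -/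
/-!
An assignment `ρ : W → ι ⊕ κ` of the points of `W` to the concatenated labels is the same thing
as a subset `X ⊆ W` (the points with a label from `ι`) together with assignments `X → ι` and
`W \ X → κ`, and the fibres of `ρ` are exactly the fibres of these two pieces. Summing the
product of the label densities over all `ρ` therefore gives the convolution of the two
decomposition sums; the mixture weights then factor out by bilinearity.
-/

open Finset

/-- The multi-object density obtained from a finite family
`Fi : Fin n → Finset α → ℝ` of (Bernoulli) set functions by summing over
ordered decompositions of `X` into `n` labelled, possibly empty parts
(encoded by assignments `φ : X → Fin n`). -/
noncomputable def mbDensity {α : Type*} [DecidableEq α] {n : ℕ}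
    (Fi : Fin n → Finset α → ℝ) (X : Finset α) : ℝ :=
  ∑ φ : {x // x ∈ X} → Fin n,
    ∏ i : Fin n, Fi i ((Finset.univ.filter (fun a => φ a = i)).image Subtype.val)

namespace LabelledDecomposition

section Gluing

variable {α ι κ : Type*} [DecidableEq α] {W X : Finset α}

def glue (φ : X → ι) (ψ : (W \ X : Finset α) → κ) : W → ι ⊕ κ := fun a =>
  if h : a.1 ∈ X then .inl (φ ⟨a, h⟩) else .inr (ψ ⟨a, mem_sdiff.2 ⟨a.2, h⟩⟩)

def leftPart (ρ : W → ι ⊕ κ) : Finset α :=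
  (univ.filter fun a => (ρ a).isLeft).image Subtype.val

theorem coe_mem_leftPart {ρ : W → ι ⊕ κ} {a : W} : a.1 ∈ leftPart ρ ↔ (ρ a).isLeft := by
  simp [leftPart]

theorem leftPart_subset (ρ : W → ι ⊕ κ) : leftPart ρ ⊆ W := by
  intro x hx
  obtain ⟨a, -, rfl⟩ := mem_image.1 hx
  exact a.2

theorem leftPart_glue (hX : X ⊆ W) (φ : X → ι) (ψ : (W \ X : Finset α) → κ) :
    leftPart (glue φ ψ) = X := by
  ext x
  by_cases hW : x ∈ W
  · rw [← Subtype.coe_mk x hW, coe_mem_leftPart]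
    by_cases hx : x ∈ X <;> simp [glue, hx]
  · exact iff_of_false (mt (leftPart_subset _ ·) hW) (mt (hX ·) hW)

theorem isLeft_of_mem {ρ : W → ι ⊕ κ} (h : leftPart ρ = X) {a : W} (ha : a.1 ∈ X) :
    (ρ a).isLeft :=
  coe_mem_leftPart.1 (h ▸ ha)

theorem isRight_of_notMem {ρ : W → ι ⊕ κ} (h : leftPart ρ = X) {a : W} (ha : a.1 ∉ X) :
    (ρ a).isRight :=
  Sum.not_isLeft.1 fun hl => ha (h ▸ coe_mem_leftPart.2 hl)

def restrictLeft (ρ : W → ι ⊕ κ) (h : leftPart ρ = X) : X → ι := fun x =>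
  (ρ ⟨x, (h ▸ leftPart_subset ρ) x.2⟩).getLeft (isLeft_of_mem h x.2)

def restrictRight (ρ : W → ι ⊕ κ) (h : leftPart ρ = X) : (W \ X : Finset α) → κ := fun y =>
  (ρ ⟨y, (mem_sdiff.1 y.2).1⟩).getRight (isRight_of_notMem h (mem_sdiff.1 y.2).2)

theorem glue_restrict (ρ : W → ι ⊕ κ) (h : leftPart ρ = X) :
    glue (restrictLeft ρ h) (restrictRight ρ h) = ρ := by
  funext a
  by_cases ha : a.1 ∈ X <;> simp [glue, restrictLeft, restrictRight, ha]

theorem restrict_glue (hX : X ⊆ W) (φ : X → ι) (ψ : (W \ X : Finset α) → κ) :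
    (restrictLeft (glue φ ψ) (leftPart_glue hX φ ψ), restrictRight (glue φ ψ) (leftPart_glue hX φ ψ))
      = (φ, ψ) := by
  ext x
  · simp [restrictLeft, glue]
  · simp [restrictRight, glue, (mem_sdiff.1 x.2).2]

theorem sum_eq_sum_powerset_glue [Fintype ι] [Fintype κ] {M : Type*} [AddCommMonoid M]
    (f : (W → ι ⊕ κ) → M) :
    ∑ ρ, f ρ = ∑ X ∈ W.powerset, ∑ φ : X → ι, ∑ ψ : (W \ X : Finset α) → κ, f (glue φ ψ) := by
  rw [← sum_fiberwise_of_maps_to (g := leftPart) fun ρ _ => mem_powerset.2 (leftPart_subset ρ)]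
  refine sum_congr rfl fun X hX => ?_
  have hXW : X ⊆ W := mem_powerset.1 hX
  rw [← Fintype.sum_prod_type']
  symm
  refine sum_bij' (fun p _ => glue p.1 p.2) (fun ρ hρ => (restrictLeft ρ (mem_filter.1 hρ).2,
    restrictRight ρ (mem_filter.1 hρ).2)) (fun p _ => by simp [leftPart_glue hXW])
    (fun _ _ => mem_univ _) (fun p _ => restrict_glue hXW p.1 p.2)
    (fun ρ hρ => glue_restrict ρ (mem_filter.1 hρ).2) fun _ _ => rfl

end Gluing

section Fibers

variable {α ι κ R : Type*} [DecidableEq α] [DecidableEq ι] [DecidableEq κ] {W X : Finset α}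

def fiber (φ : X → ι) (i : ι) : Finset α :=
  (univ.filter fun a => φ a = i).image Subtype.val

theorem mem_fiber {φ : X → ι} {i : ι} {x : α} :
    x ∈ fiber φ i ↔ ∃ h : x ∈ X, φ ⟨x, h⟩ = i := by
  simp [fiber]

theorem fiber_comp_equiv (φ : X → ι) (e : ι ≃ κ) (i : ι) :
    fiber (e ∘ φ) (e i) = fiber φ i := by
  ext x
  simp [mem_fiber]

def partitionSum [Fintype ι] [CommSemiring R] (F : ι → Finset α → R) (X : Finset α) : R :=
  ∑ φ : X → ι, ∏ i, F i (fiber φ i)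

theorem partitionSum_comp_equiv [Fintype ι] [Fintype κ] [CommSemiring R] (e : ι ≃ κ)
    (F : κ → Finset α → R) (X : Finset α) :
    partitionSum (F ∘ e) X = partitionSum F X := by
  refine Fintype.sum_equiv ((Equiv.refl X).arrowCongr e) _ _ fun φ => ?_
  rw [← e.prod_comp]
  exact prod_congr rfl fun i _ => by rw [← fiber_comp_equiv φ e i]; rfl

theorem fiber_glue_inl (hX : X ⊆ W) (φ : X → ι) (ψ : (W \ X : Finset α) → κ)
    (i : ι) : fiber (glue φ ψ) (.inl i) = fiber φ i := by
  ext x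
  simp only [mem_fiber, glue]
  constructor
  · rintro ⟨hw, h⟩
    by_cases hx : x ∈ X <;> simp_all
  · rintro ⟨hx, h⟩
    exact ⟨hX hx, by simp [hx, h]⟩

theorem fiber_glue_inr (φ : X → ι) (ψ : (W \ X : Finset α) → κ) (k : κ) :
    fiber (glue φ ψ) (.inr k) = fiber ψ k := by
  ext x
  simp only [mem_fiber, glue]
  constructor
  · rintro ⟨hw, h⟩
    by_cases hx : x ∈ X <;> simp_all
  · rintro ⟨hx, h⟩
    have hx' := mem_sdiff.1 hx
    exact ⟨hx'.1, by simp [hx'.2, h]⟩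

theorem partitionSum_sumElim [Fintype ι] [Fintype κ] [CommSemiring R] (F : ι → Finset α → R)
    (G : κ → Finset α → R) (W : Finset α) :
    partitionSum (Sum.elim F G) W = ∑ X ∈ W.powerset, partitionSum F X * partitionSum G (W \ X) := by
  rw [partitionSum, sum_eq_sum_powerset_glue]
  refine sum_congr rfl fun X hX => ?_
  rw [partitionSum, partitionSum, sum_mul_sum]
  refine sum_congr rfl fun φ _ => sum_congr rfl fun ψ _ => ?_
  rw [Fintype.prod_sum_type]
  simp only [Sum.elim_inl, Sum.elim_inr, fiber_glue_inl (mem_powerset.1 hX), fiber_glue_inr]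

end Fibers

end LabelledDecomposition

open LabelledDecomposition

theorem mbDensity_eq_partitionSum {α : Type*} [DecidableEq α] {n : ℕ}
    (F : Fin n → Finset α → ℝ) : mbDensity F = partitionSum F :=
  rfl

theorem mbDensity_addCases {α : Type*} [DecidableEq α] {n nb : ℕ} (F : Fin n → Finset α → ℝ)
    (G : Fin nb → Finset α → ℝ) (W : Finset α) :
    mbDensity (fun i : Fin (n + nb) => Fin.addCases F G i) W
      = ∑ X ∈ W.powerset, mbDensity F X * mbDensity G (W \ X) := by
  have h : (fun i : Fin (n + nb) => Fin.addCases F G i) = Sum.elim F G ∘ finSumFinEquiv.symm := by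
    funext i
    refine Fin.addCases (fun i => ?_) (fun i => ?_) i <;> simp
  simp only [mbDensity_eq_partitionSum, h, partitionSum_comp_equiv, partitionSum_sumElim]

theorem mbm_convolution_general {α : Type*} [DecidableEq α] {J K : Type*}
    [Fintype J] [Fintype K] (n nb : ℕ)
    (w : J → ℝ) (v : K → ℝ)
    (F : J → Fin n → Finset α → ℝ) (G : K → Fin nb → Finset α → ℝ)
    (W : Finset α) :
    ∑ X ∈ W.powerset,
        (∑ j : J, w j * mbDensity (F j) X) *
          (∑ k : K, v k * mbDensity (G k) (W \ X)) =
      ∑ j : J, ∑ k : K, w j * v k *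
        mbDensity (fun i : Fin (n + nb) => Fin.addCases (F j) (G k) i) W := by
  simp_rw [sum_mul_sum, mbDensity_addCases, mul_sum]
  rw [sum_comm]
  refine sum_congr rfl fun j _ => ?_
  rw [sum_comm]
  exact sum_congr rfl fun k _ => sum_congr rfl fun X _ => by ring

/-- Convolution of two multi-Bernoulli mixtures is a multi-Bernoulli mixture:
the components index over pairs `(j,k)` and concatenate the Bernoulli lists,
with weights `w_j v_k`. -/
theorem mbm_convolution {α : Type*} [DecidableEq α] {J K : Type*}
    [Fintype J] [Fintype K] (n nb : ℕ)
    (w : J → ℝ) (v : K → ℝ)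
    (F : J → Fin n → Finset α → ℝ) (G : K → Fin nb → Finset α → ℝ)
    (hF : ∀ (j : J) (i : Fin n) (X : Finset α), 2 ≤ X.card → F j i X = 0)
    (hG : ∀ (k : K) (i : Fin nb) (Y : Finset α), 2 ≤ Y.card → G k i Y = 0)
    (W : Finset α) :
    ∑ X ∈ W.powerset,
        (∑ j : J, w j * mbDensity (F j) X) *
          (∑ k : K, v k * mbDensity (G k) (W \ X)) =
      ∑ j : J, ∑ k : K, w j * v k *
        mbDensity (fun i : Fin (n + nb) => Fin.addCases (F j) (G k) i) W :=
  mbm_convolution_general n nb w v F G W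
end

section
/- A labelled multi-Bernoulli density with distinct deterministic labels, evaluated at a labelled set with distinct labels, collapses to a single term: let f(X) = ∑_{X₁⊎...⊎Xₙ=X} ∏ᵢ f_i^{lb}(Xᵢ) where f_i^{lb}(∅) = 1-rᵢ, f_i^{lb}({(x,ℓ)}) = rᵢ pᵢ(x) [ℓ = ℓᵢ], with ℓ₁,...,ℓₙ pairwise distinct. Then for distinct indices a₁,...,a_p ∈ {1,...,n}, f({(x₁,ℓ_{a₁}),...,(x_p,ℓ_{a_p})}) = (∏_{m=1}^p r_{a_m} p_{a_m}(x_m)) · ∏_{i ∉ {a₁,...,a_p}} (1-rᵢ), and f vanishes on any labelled set containing a label outside {ℓ₁,...,ℓₙ} or containing two elements with the same label. -/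
open Finset

/-- Labelled Bernoulli density with existence `r`, state density `p` and
deterministic label `lab`: `1-r` on `∅`, `r·p(x)·[ℓ = lab]` on `{(x,ℓ)}`,
and `0` otherwise. -/
noncomputable def labBern {α L : Type*} [DecidableEq α] [DecidableEq L]
    (r : ℝ) (p : α → ℝ) (lab : L) (X : Finset (α × L)) : ℝ :=
  if X = ∅ then 1 - r
  else if X.card = 1 then r * ∑ q ∈ X, (if q.2 = lab then p q.1 else 0)
  else 0

/-- The labelled multi-Bernoulli density: sum over ordered decompositions of
`X` into `n` labelled, possibly empty parts (encoded by `φ : X → Fin n`). -/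
noncomputable def labMB {α L : Type*} [DecidableEq α] [DecidableEq L] {n : ℕ}
    (r : Fin n → ℝ) (p : Fin n → α → ℝ) (lab : Fin n → L)
    (X : Finset (α × L)) : ℝ :=
  ∑ φ : {q // q ∈ X} → Fin n,
    ∏ i : Fin n,
      labBern (r i) (p i) (lab i)
        ((Finset.univ.filter (fun a => φ a = i)).image Subtype.val)

/-!
A decomposition contributes nothing as soon as one of its parts has two elements or
contains an element whose label is not the label of that part. So only the
decompositions sending every element to the component carrying its label survive.
Since the labels `lab i` are distinct, there is at most one such decomposition; it
exists exactly when the labels of `X` are distinct and all among the `lab i`, and then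
its term is the claimed product.
-/

section LabBern

variable {α L : Type*} [DecidableEq α] [DecidableEq L] {r : ℝ} {p : α → ℝ} {lab : L}

@[simp]
lemma labBern_empty : labBern r p lab ∅ = 1 - r := if_pos rfl

lemma labBern_singleton (q : α × L) :
    labBern r p lab {q} = r * (if q.2 = lab then p q.1 else 0) := by
  rw [labBern, if_neg (singleton_ne_empty q), if_pos (card_singleton q), sum_singleton]

lemma labBern_eq_zero_of_one_lt_card {S : Finset (α × L)} (h : 1 < S.card) :
    labBern r p lab S = 0 := by
  rw [labBern, if_neg (card_pos.mp (by omega)).ne_empty, if_neg h.ne']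

lemma labBern_eq_zero_of_mem_of_ne {S : Finset (α × L)} {q : α × L} (hq : q ∈ S)
    (h : q.2 ≠ lab) : labBern r p lab S = 0 := by
  obtain hS | hS := le_or_gt S.card 1
  · obtain rfl : S = {q} :=
      eq_singleton_iff_unique_mem.mpr ⟨hq, fun x hx => card_le_one.mp hS x hx q hq⟩
    simp [labBern_singleton, h]
  · exact labBern_eq_zero_of_one_lt_card hS

end LabBern

section LabMBTerm

variable {α L ι κ : Type*} [DecidableEq α] [DecidableEq L] [Fintype ι] [Fintype κ] {n : ℕ}
  (r : Fin n → ℝ) (p : Fin n → α → ℝ) (lab : Fin n → L)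

noncomputable def labMBTerm (e : ι → α × L) (ψ : ι → Fin n) : ℝ :=
  ∏ i, labBern (r i) (p i) (lab i) ((univ.filter (ψ · = i)).image e)

lemma labMB_eq_sum_labMBTerm (X : Finset (α × L)) :
    labMB r p lab X = ∑ φ : {q // q ∈ X} → Fin n, labMBTerm r p lab Subtype.val φ :=
  rfl

variable {r p lab}

lemma labMBTerm_comp_equiv (E : ι ≃ κ) (e : κ → α × L) (ψ : κ → Fin n) :
    labMBTerm r p lab (e ∘ E) (ψ ∘ E) = labMBTerm r p lab e ψ := by
  unfold labMBTerm
  congr! 2 with i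
  ext q
  simp only [mem_image, mem_filter, mem_univ, true_and, Function.comp_apply]
  exact E.exists_congr_left.trans (by simp)

lemma labMB_image [DecidableEq ι] {e : ι → α × L} (he : Function.Injective e) :
    labMB r p lab (univ.image e) = ∑ ψ : ι → Fin n, labMBTerm r p lab e ψ := by
  let E : ι ≃ {q // q ∈ univ.image e} :=
    Equiv.ofBijective (fun t => ⟨e t, mem_image_of_mem e (mem_univ t)⟩)
      ⟨fun s t h => he (congrArg Subtype.val h),
        fun ⟨q, hq⟩ => by obtain ⟨t, -, rfl⟩ := mem_image.mp hq; exact ⟨t, rfl⟩⟩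
  rw [labMB_eq_sum_labMBTerm]
  refine (Fintype.sum_equiv (E.arrowCongr (Equiv.refl _)) _ _ fun ψ => ?_).symm
  rw [← labMBTerm_comp_equiv E]
  congr 1
  ext t
  simp [E]

lemma labMBTerm_eq_zero_of_label_ne {e : ι → α × L} {ψ : ι → Fin n} {t : ι}
    (ht : (e t).2 ≠ lab (ψ t)) : labMBTerm r p lab e ψ = 0 :=
  prod_eq_zero (mem_univ (ψ t)) <|
    labBern_eq_zero_of_mem_of_ne (mem_image_of_mem e (by simp)) ht

lemma labMBTerm_eq_zero_of_not_injective {e : ι → α × L} (he : Function.Injective e)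
    {ψ : ι → Fin n} (hψ : ¬ Function.Injective ψ) : labMBTerm r p lab e ψ = 0 := by
  obtain ⟨s, t, hst, hne⟩ : ∃ s t, ψ s = ψ t ∧ s ≠ t := by
    simpa [Function.Injective] using hψ
  refine prod_eq_zero (mem_univ (ψ t)) (labBern_eq_zero_of_one_lt_card ?_)
  exact one_lt_card.mpr ⟨e s, mem_image_of_mem e (by simp [hst]),
    e t, mem_image_of_mem e (by simp), he.ne hne⟩

lemma labMBTerm_of_injective {e : ι → α × L} {ψ : ι → Fin n} (hψ : Function.Injective ψ)
    (hlabel : ∀ t, (e t).2 = lab (ψ t)) :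
    labMBTerm r p lab e ψ =
      (∏ t, r (ψ t) * p (ψ t) (e t).1) * ∏ i ∈ univ \ univ.image ψ, (1 - r i) := by
  rw [labMBTerm, ← prod_sdiff (subset_univ (univ.image ψ)), prod_image fun s _ t _ h => hψ h,
    mul_comm]
  congr 1
  · refine prod_congr rfl fun t _ => ?_
    have hsingle : univ.filter (ψ · = ψ t) = {t} := by ext s; simp [hψ.eq_iff]
    rw [hsingle, image_singleton, labBern_singleton, if_pos (hlabel t)]
  · refine prod_congr rfl fun i hi => ?_
    have hempty : univ.filter (ψ · = i) = ∅ :=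
      filter_eq_empty_iff.mpr fun t _ hti =>
        (mem_sdiff.mp hi).2 (hti ▸ mem_image_of_mem ψ (mem_univ t))
    rw [hempty, image_empty, labBern_empty]

end LabMBTerm

/-- A labelled multi-Bernoulli density with pairwise distinct deterministic
labels, evaluated at a labelled set with distinct labels
`{(x₁,ℓ_{a₁}),...,(x_p,ℓ_{a_p})}`, collapses to the single term
`(∏_m r_{a_m} p_{a_m}(x_m)) · ∏_{i∉{a₁,...,a_p}} (1-rᵢ)`; and it vanishes on
any labelled set containing a label outside `{ℓ₁,...,ℓₙ}` or two elements
with the same label. -/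
theorem labelled_mb_evaluation {α L : Type*} [DecidableEq α] [DecidableEq L]
    (n : ℕ) (r : Fin n → ℝ) (p : Fin n → α → ℝ)
    (lab : Fin n → L) (hlab : Function.Injective lab) :
    (∀ (m : ℕ) (a : Fin m → Fin n), Function.Injective a → ∀ x : Fin m → α,
      labMB r p lab (Finset.univ.image (fun t : Fin m => (x t, lab (a t)))) =
        (∏ t : Fin m, r (a t) * p (a t) (x t)) *
          ∏ i ∈ Finset.univ \ Finset.univ.image a, (1 - r i)) ∧
    (∀ X : Finset (α × L), (∃ q ∈ X, ∀ i, q.2 ≠ lab i) → labMB r p lab X = 0) ∧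
    (∀ X : Finset (α × L),
      (∃ q ∈ X, ∃ q' ∈ X, q ≠ q' ∧ q.2 = q'.2) → labMB r p lab X = 0) := by
  refine ⟨fun m a ha x => ?_, fun X ⟨q, hq, hout⟩ => ?_, fun X ⟨q, hq, q', hq', hne, hq2⟩ => ?_⟩
  · have he : Function.Injective fun t => (x t, lab (a t)) :=
      fun s t h => ha (hlab (Prod.ext_iff.mp h).2)
    rw [labMB_image he, sum_eq_single a (fun ψ _ hψ => ?_) (by simp)]
    · exact labMBTerm_of_injective ha fun t => rfl
    obtain ⟨t, ht⟩ := Function.ne_iff.mp hψ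
    exact labMBTerm_eq_zero_of_label_ne fun h => ht (hlab h).symm
  · rw [labMB_eq_sum_labMBTerm]
    exact sum_eq_zero fun φ _ => labMBTerm_eq_zero_of_label_ne (t := ⟨q, hq⟩) (hout _)
  · rw [labMB_eq_sum_labMBTerm]
    refine sum_eq_zero fun φ _ => ?_
    by_cases hlabel : ∀ t, t.1.2 = lab (φ t)
    · refine labMBTerm_eq_zero_of_not_injective Subtype.val_injective fun hφ => hne ?_
      have : φ ⟨q, hq⟩ = φ ⟨q', hq'⟩ := hlab (by rw [← hlabel, ← hlabel, hq2])
      exact congrArg Subtype.val (hφ this)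
    · push Not at hlabel
      exact labMBTerm_eq_zero_of_label_ne hlabel.choose_spec
end
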